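/- Let μ := (1/3)(δ_{(0,5/8)} + δ_{(3/8,3/8)} + δ_{(5/8,1)}) and ν := (1/3)(δ_{(0,3/8)} + δ_{(3/8,1)} + δ_{(5/8,5/8)}) be distributions on [0,1]². Then for every p ∈ [0,1], the distribution of the feedback pair (𝟙{S ≤ p}, 𝟙{p ≤ B}) is the same when (S,B) ∼ μ as when (S,B) ∼ ν. -/
import Mathlib


open MeasureTheory ENNReal

noncomputable def muDist : Measure (ℝ × ℝ) :=
  ((1:ℝ≥0∞)/3) • Measure.dirac (0, 5/8) + ((1:ℝ≥0∞)/3) • Measure.dirac (3/8, 3/8)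
    + ((1:ℝ≥0∞)/3) • Measure.dirac (5/8, 1)

noncomputable def nuDist : Measure (ℝ × ℝ) :=
  ((1:ℝ≥0∞)/3) • Measure.dirac (0, 3/8) + ((1:ℝ≥0∞)/3) • Measure.dirac (3/8, 1)
    + ((1:ℝ≥0∞)/3) • Measure.dirac (5/8, 5/8)

/-- the feedback map: (𝟙{s ≤ p}, 𝟙{p ≤ b}) -/
noncomputable def feedback (p : ℝ) (x : ℝ × ℝ) : ℕ × ℕ :=
  (if x.1 ≤ p then 1 else 0, if p ≤ x.2 then 1 else 0)

lemma feedback_measurable (p : ℝ) : Measurable (feedback p) := by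
  apply Measurable.prod
  · exact Measurable.ite (measurableSet_le (measurable_fst) measurable_const)
      measurable_const measurable_const
  · exact Measurable.ite (measurableSet_le measurable_const (measurable_snd))
      measurable_const measurable_const

theorem feedback_indistinguishable (p : ℝ) (hp : p ∈ Set.Icc (0:ℝ) 1) :
    Measure.map (feedback p) muDist = Measure.map (feedback p) nuDist := by
  obtain ⟨hp0, hp1⟩ := hp
  have hm := feedback_measurable p
  simp only [muDist, nuDist, Measure.map_add _ _ hm, Measure.map_smul,
    Measure.map_dirac' hm]
  rcases le_or_gt p (3/8 : ℝ) with h1 | h1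
  · rcases lt_or_eq_of_le h1 with h1' | h1'
    · simp [feedback, hp0, h1, h1'.le, not_le.2 h1', h1.trans (by norm_num : (3/8:ℝ) ≤ 5/8),
        h1.trans (by norm_num : (3/8:ℝ) ≤ 1), not_le.2 (h1'.trans_le (by norm_num : (3/8:ℝ) ≤ 5/8))]
    · subst h1'
      norm_num [feedback]
  · rcases le_or_gt p (5/8 : ℝ) with h2 | h2
    · have h1n : ¬ p ≤ 3/8 := not_le.2 h1
      have h1n' : ¬ (3/8:ℝ) ≤ p → False := fun h => h h1.le
      simp [feedback, hp0, hp1, h1.le, h1n, h2]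
      abel
    · have h2n : ¬ p ≤ 5/8 := not_le.2 h2
      simp [feedback, hp0, hp1, h1.le, h2.le, not_le.2 h1, h2n]
      abel
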